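/- Let n ≥ 4 and let i be an odd integer with 1 ≤ i ≤ n−2. Then, as maps ℝ^n → ℝ^n, (s_0 ∘ [2,n−1] ∘ [1,n−2] ∘ s_n)^{(i−1)/2} ∘ [n−i, n−1] ∘ [n−i−1, n−2] ∘ ⋯ ∘ [1, i] = (s_{n−1} ∘ s_{n−2} ∘ ⋯ ∘ s_1) ∘ t_{e_2+e_3+⋯+e_i}, where the trailing product on the left consists of the blocks [k, k+i−1] for k = n−i, …, 1, and for i = 1 the translation on the right is by the zero vector. (Combined with the identity for ω_1, this says that ω_i = π_1[1,n−2]s_n(s_0[2,n−1][1,n−2]s_n)^{(i−1)/2}[n−i,n−1]⋯[1,i] acts on ℝ^n as translation by e_1+⋯+e_i, for odd i, in type D_n^{(1)}.) -/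
import Mathlib


noncomputable section

/-- Value of `x : ℝ^n` at the natural (0-indexed) index `m`, or `0` if out of range. -/
def xval {n : ℕ} (x : Fin n → ℝ) (m : ℕ) : ℝ := if h : m < n then x ⟨m, h⟩ else 0

/-- The simple affine reflections of type `D_n^{(1)}` acting on `ℝ^n`:
for `1 ≤ j ≤ n-1`, `sD n j` swaps the `j`-th and `(j+1)`-th coordinates (1-indexed);
`sD n n` is `x ↦ (x₁, …, x_{n−2}, −xₙ, −x_{n−1})`;
`sD n 0` is `x ↦ (1 - x₂, 1 - x₁, x₃, …, xₙ)`. -/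
def sD (n : ℕ) (j : ℕ) (x : Fin n → ℝ) (k : Fin n) : ℝ :=
  if j = 0 then
    if (k : ℕ) = 0 then 1 - xval x 1
    else if (k : ℕ) = 1 then 1 - xval x 0
    else x k
  else if j = n then
    if (k : ℕ) = n - 2 then -xval x (n - 1)
    else if (k : ℕ) = n - 1 then -xval x (n - 2)
    else x k
  else
    if (k : ℕ) = j - 1 then xval x j
    else if (k : ℕ) = j then xval x (j - 1)
    else x k

/-- The block `[k,l] = s_k ∘ s_{k+1} ∘ ⋯ ∘ s_l` (rightmost factor applied first). -/
def blkD (n k l : ℕ) : (Fin n → ℝ) → (Fin n → ℝ) :=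
  (List.range' k (l + 1 - k)).foldr (fun j f => sD n j ∘ f) id

/-- The trailing product `[n−i,n−1] ∘ [n−i−1,n−2] ∘ ⋯ ∘ [1,i]`,
consisting of the blocks `[k, k+i−1]` for `k = n−i, n−i−1, …, 1`. -/
def trailD (n i : ℕ) : (Fin n → ℝ) → (Fin n → ℝ) :=
  ((List.range' 1 (n - i)).reverse).foldr (fun m f => blkD n m (m + i - 1) ∘ f) id


/-- The composite `s_{n−1} ∘ s_{n−2} ∘ ⋯ ∘ s_1` (rightmost factor applied first). -/
def revD (n : ℕ) : (Fin n → ℝ) → (Fin n → ℝ) :=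
  ((List.range' 1 (n - 1)).reverse).foldr (fun j f => sD n j ∘ f) id

lemma xval_lt {n : ℕ} (x : Fin n → ℝ) {m : ℕ} (h : m < n) : xval x m = x ⟨m, h⟩ := dif_pos h

lemma funext_xval {n : ℕ} {f g : Fin n → ℝ} (h : ∀ m, m < n → xval f m = xval g m) : f = g :=
  funext fun k => by simpa [xval] using h (k : ℕ) k.isLt

lemma sD_mid {n j : ℕ} (hj1 : 1 ≤ j) (hj : j < n) (x : Fin n → ℝ) {m : ℕ} (hm : m < n) :
    xval (sD n j x) m = if m = j - 1 then xval x j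
      else if m = j then xval x (j - 1) else xval x m := by
  rw [xval_lt _ hm]
  unfold sD
  rw [if_neg (by omega), if_neg (by omega)]
  split_ifs <;> simp_all [xval_lt]

lemma sD_top {n : ℕ} (hn : 2 ≤ n) (x : Fin n → ℝ) {m : ℕ} (hm : m < n) :
    xval (sD n n x) m = if m = n - 2 then -xval x (n - 1)
      else if m = n - 1 then -xval x (n - 2) else xval x m := by
  rw [xval_lt _ hm]
  unfold sD
  rw [if_neg (by omega), if_pos rfl]
  split_ifs <;> simp_all [xval_lt]

lemma sD_zero {n : ℕ} (hn : 2 ≤ n) (x : Fin n → ℝ) {m : ℕ} (hm : m < n) :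
    xval (sD n 0 x) m = if m = 0 then 1 - xval x 1
      else if m = 1 then 1 - xval x 0 else xval x m := by
  rw [xval_lt _ hm]
  unfold sD
  rw [if_pos rfl]
  split_ifs <;> simp_all [xval_lt]

lemma blkD_base (n k : ℕ) : blkD n k k = sD n k := by
  unfold blkD
  rw [show k + 1 - k = 1 by omega, List.range'_one]
  rfl

lemma blkD_cons (n k d : ℕ) :
    blkD n k (k + (d + 1)) = sD n k ∘ blkD n (k + 1) (k + (d + 1)) := by
  unfold blkD
  rw [show k + (d + 1) + 1 - k = (d + 1) + 1 by omega,
      show k + (d + 1) + 1 - (k + 1) = d + 1 by omega, List.range'_succ]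
  rfl

lemma blkD_apply {n : ℕ} : ∀ (d k : ℕ), 1 ≤ k → k + d ≤ n - 1 → ∀ (x : Fin n → ℝ) (m : ℕ), m < n →
    xval (blkD n k (k + d) x) m =
      if m = k - 1 then xval x (k + d)
      else if k ≤ m ∧ m ≤ k + d then xval x (m - 1) else xval x m := by
  intro d
  induction d with
  | zero =>
    intro k hk hkl x m hm
    rw [Nat.add_zero, blkD_base, sD_mid hk (by omega) x hm]
    split_ifs <;> first | rfl | (exact congrArg (xval x) (by omega)) | (exfalso; omega)
  | succ d ih =>
    intro k hk hkl x m hm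
    rw [blkD_cons, Function.comp_apply, sD_mid hk (by omega) _ hm,
        show k + (d + 1) = (k + 1) + d by omega]
    have h1 : k < n := by omega
    have h2 : k - 1 < n := by omega
    rw [ih (k+1) (by omega) (by omega) x k h1,
        ih (k+1) (by omega) (by omega) x (k-1) h2,
        ih (k+1) (by omega) (by omega) x m hm]
    split_ifs <;> first | rfl | (exact congrArg (xval x) (by omega)) | (exfalso; omega)

lemma blkD_apply' {n k l : ℕ} (hk : 1 ≤ k) (hkl : k ≤ l) (hl : l ≤ n - 1)
    (x : Fin n → ℝ) {m : ℕ} (hm : m < n) :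
    xval (blkD n k l x) m = if m = k - 1 then xval x l
      else if k ≤ m ∧ m ≤ l then xval x (m - 1) else xval x m := by
  obtain ⟨d, rfl⟩ : ∃ d, l = k + d := ⟨l - k, by omega⟩
  exact blkD_apply d k hk (by omega) x m hm

lemma revfold_cons {α : Type*} (g : ℕ → α → α) (m : ℕ) :
    ((List.range' 1 (m + 1)).reverse).foldr (fun j f => g j ∘ f) id
      = g (m + 1) ∘ ((List.range' 1 m).reverse).foldr (fun j f => g j ∘ f) id := by
  rw [List.range'_concat, List.reverse_append, List.reverse_singleton,
      List.singleton_append, List.foldr_cons, show 1 + 1 * m = m + 1 from by omega]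

lemma trail_aux {n i : ℕ} (hi : 1 ≤ i) :
    ∀ m : ℕ, m + i ≤ n → ∀ (x : Fin n → ℝ) (j : ℕ), j < n →
    xval ((((List.range' 1 m).reverse).foldr (fun m f => blkD n m (m + i - 1) ∘ f) id) x) j =
      if j < m then xval x (j + i) else if j < m + i then xval x (j - m) else xval x j := by
  intro m
  induction m with
  | zero =>
    intro _ x j hj
    simp only [List.range'_zero, List.reverse_nil, List.foldr_nil, id_eq]
    split_ifs <;> first | rfl | (exact congrArg (xval x) (by omega)) | (exfalso; omega)
  | succ m ih =>
    intro hmn x j hj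
    rw [revfold_cons (fun m => blkD n m (m + i - 1)), Function.comp_apply,
        blkD_apply' (by omega) (by omega) (by omega) _ hj]
    have h1 : m + 1 + i - 1 < n := by omega
    have h2 : j - 1 < n := by omega
    rw [ih (by omega) x (m + 1 + i - 1) h1, ih (by omega) x (j - 1) h2,
        ih (by omega) x j hj]
    split_ifs <;> first | rfl | (exact congrArg (xval x) (by omega)) | (exfalso; omega)

lemma trailD_apply {n i : ℕ} (hi : 1 ≤ i) (hin : i ≤ n) (x : Fin n → ℝ) {j : ℕ} (hj : j < n) :
    xval (trailD n i x) j = if j < n - i then xval x (j + i) else xval x (j + i - n) := by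
  unfold trailD
  rw [trail_aux hi (n - i) (by omega) x j hj]
  split_ifs <;> first | rfl | (exact congrArg (xval x) (by omega)) | (exfalso; omega)

lemma revD_aux {n : ℕ} : ∀ m : ℕ, m ≤ n - 1 → ∀ (x : Fin n → ℝ) (j : ℕ), j < n →
    xval ((((List.range' 1 m).reverse).foldr (fun j f => sD n j ∘ f) id) x) j =
      if j < m then xval x (j + 1) else if j = m then xval x 0 else xval x j := by
  intro m
  induction m with
  | zero =>
    intro _ x j hj
    simp only [List.range'_zero, List.reverse_nil, List.foldr_nil, id_eq]
    split_ifs <;> first | rfl | (exact congrArg (xval x) (by omega)) | (exfalso; omega)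
  | succ m ih =>
    intro hmn x j hj
    rw [revfold_cons (sD n), Function.comp_apply, sD_mid (by omega) (by omega) _ hj]
    have h1 : m + 1 < n := by omega
    have h2 : m + 1 - 1 < n := by omega
    rw [ih (by omega) x (m + 1) h1, ih (by omega) x (m + 1 - 1) h2, ih (by omega) x j hj]
    split_ifs <;> first | rfl | (exact congrArg (xval x) (by omega)) | (exfalso; omega)

lemma revD_apply {n : ℕ} (hn : 2 ≤ n) (x : Fin n → ℝ) {j : ℕ} (hj : j < n) :
    xval (revD n x) j = if j < n - 1 then xval x (j + 1) else xval x 0 := by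
  unfold revD
  rw [revD_aux (n - 1) (by omega) x j hj]
  split_ifs <;> first | rfl | (exact congrArg (xval x) (by omega)) | (exfalso; omega)

lemma A_apply {n : ℕ} (hn : 4 ≤ n) (x : Fin n → ℝ) {j : ℕ} (hj : j < n) :
    xval ((sD n 0 ∘ blkD n 2 (n - 1) ∘ blkD n 1 (n - 2) ∘ sD n n) x) j =
      if j < 2 then xval x (j + n - 2) + 1 else xval x (j - 2) := by
  simp only [Function.comp_apply]
  rw [sD_zero (by omega) _ hj]
  rcases Nat.lt_or_ge j 2 with h2 | h2
  · interval_cases j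
    · rw [if_pos rfl,
          blkD_apply' (by omega) (by omega) (by omega) _ (show 1 < n by omega),
          if_pos (show (1 : ℕ) = 2 - 1 by omega),
          blkD_apply' (by omega) (by omega) (by omega) _ (show n - 1 < n by omega),
          if_neg (by omega), if_neg (by omega),
          sD_top (by omega) _ (show n - 1 < n by omega),
          if_neg (by omega), if_pos rfl,
          if_pos (show (0 : ℕ) < 2 by omega),
          show 0 + n - 2 = n - 2 from by omega]
      ring
    · rw [if_neg (by omega), if_pos rfl,
          blkD_apply' (by omega) (by omega) (by omega) _ (show 0 < n by omega),
          if_neg (by omega), if_neg (by omega),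
          blkD_apply' (by omega) (by omega) (by omega) _ (show 0 < n by omega),
          if_pos rfl,
          sD_top (by omega) _ (show n - 2 < n by omega),
          if_pos rfl,
          if_pos (show (1 : ℕ) < 2 by omega),
          show 1 + n - 2 = n - 1 from by omega]
      ring
  · rw [if_neg (by omega), if_neg (by omega),
        blkD_apply' (by omega) (by omega) (by omega) _ hj,
        if_neg (by omega), if_pos (show 2 ≤ j ∧ j ≤ n - 1 by omega),
        blkD_apply' (by omega) (by omega) (by omega) _ (show j - 1 < n by omega),
        if_neg (by omega), if_pos (show 1 ≤ j - 1 ∧ j - 1 ≤ n - 2 by omega),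
        sD_top (by omega) _ (show j - 1 - 1 < n by omega),
        if_neg (by omega), if_neg (by omega), if_neg (by omega),
        show j - 1 - 1 = j - 2 from by omega]

lemma iterA {n : ℕ} (hn : 4 ≤ n) : ∀ m : ℕ, 2 * m ≤ n → ∀ (x : Fin n → ℝ) (j : ℕ), j < n →
    xval ((sD n 0 ∘ blkD n 2 (n - 1) ∘ blkD n 1 (n - 2) ∘ sD n n)^[m] x) j =
      if j < 2 * m then xval x (j + n - 2 * m) + 1 else xval x (j - 2 * m) := by
  intro m
  induction m with
  | zero =>
    intro _ x j hj
    simp only [Function.iterate_zero, id_eq]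
    rw [if_neg (by omega)]
    exact congrArg (xval x) (by omega)
  | succ m ih =>
    intro hmn x j hj
    rw [Function.iterate_succ_apply', A_apply hn _ hj]
    rcases Nat.lt_or_ge j 2 with h2 | h2
    · rw [if_pos h2, ih (by omega) x (j + n - 2) (by omega),
          if_neg (show ¬(j + n - 2 < 2 * m) by omega),
          if_pos (show j < 2 * (m + 1) by omega),
          show j + n - 2 - 2 * m = j + n - 2 * (m + 1) from by omega]
    · rw [if_neg (by omega), ih (by omega) x (j - 2) (by omega)]
      rcases Nat.lt_or_ge j (2 * (m + 1)) with h3 | h3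
      · rw [if_pos (show j - 2 < 2 * m by omega), if_pos h3,
            show j - 2 + n - 2 * m = j + n - 2 * (m + 1) from by omega]
      · rw [if_neg (show ¬(j - 2 < 2 * m) by omega), if_neg (by omega),
            show j - 2 - 2 * m = j - 2 * (m + 1) from by omega]

lemma xval_add {n : ℕ} (x y : Fin n → ℝ) {m : ℕ} (hm : m < n) :
    xval (x + y) m = xval x m + xval y m := by
  rw [xval_lt _ hm, xval_lt _ hm, xval_lt _ hm, Pi.add_apply]

/-- In type `D_n^{(1)}`, for odd `i` with `1 ≤ i ≤ n−2`,
`(s₀ ∘ [2,n−1] ∘ [1,n−2] ∘ sₙ)^{(i−1)/2} ∘ [n−i,n−1] ∘ ⋯ ∘ [1,i]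
  = (s_{n−1} ∘ ⋯ ∘ s_1) ∘ t_{e₂ + ⋯ + e_i}`. -/
theorem statement6 (n i : ℕ) (hn : 4 ≤ n) (hi1 : 1 ≤ i) (hin : i ≤ n - 2) (hi : Odd i) :
    (sD n 0 ∘ blkD n 2 (n - 1) ∘ blkD n 1 (n - 2) ∘ sD n n)^[(i - 1) / 2] ∘ trailD n i
      = revD n ∘
        fun x => x + (fun (k : Fin n) => if 1 ≤ (k : ℕ) ∧ (k : ℕ) < i then (1 : ℝ) else 0) := by
  obtain ⟨t, rfl⟩ := hi
  funext x
  refine funext_xval fun j hj => ?_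
  rw [Function.comp_apply, Function.comp_apply,
      show (2 * t + 1 - 1) / 2 = t by omega,
      iterA hn t (by omega) _ j hj,
      revD_apply (by omega) _ hj]
  have hv : ∀ m : ℕ, m < n →
      xval (x + fun (k : Fin n) => if 1 ≤ (k : ℕ) ∧ (k : ℕ) < 2 * t + 1 then (1 : ℝ) else 0) m
        = xval x m + if 1 ≤ m ∧ m < 2 * t + 1 then (1 : ℝ) else 0 := by
    intro m hm
    rw [xval_add _ _ hm]
    congr 1
    rw [xval_lt _ hm]
  rcases Nat.lt_or_ge j (2 * t) with h1 | h1
  · rw [if_pos h1,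
        trailD_apply (by omega) (by omega) x (show j + n - 2 * t < n by omega),
        if_neg (show ¬(j + n - 2 * t < n - (2 * t + 1)) by omega),
        show j + n - 2 * t + (2 * t + 1) - n = j + 1 from by omega,
        hv (j + 1) (by omega),
        if_pos (show 1 ≤ j + 1 ∧ j + 1 < 2 * t + 1 by omega),
        if_pos (show j < n - 1 by omega)]
  · rw [if_neg (show ¬(j < 2 * t) by omega),
        trailD_apply (by omega) (by omega) x (show j - 2 * t < n by omega)]
    rcases Nat.lt_or_ge j (n - 1) with h2 | h2
    · rw [if_pos (show j - 2 * t < n - (2 * t + 1) by omega),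
          show j - 2 * t + (2 * t + 1) = j + 1 from by omega,
          if_pos h2, hv (j + 1) (by omega),
          if_neg (show ¬(1 ≤ j + 1 ∧ j + 1 < 2 * t + 1) by omega), add_zero]
    · rw [if_neg (show ¬(j - 2 * t < n - (2 * t + 1)) by omega),
          show j - 2 * t + (2 * t + 1) - n = 0 from by omega,
          if_neg (show ¬(j < n - 1) by omega), hv 0 (by omega),
          if_neg (show ¬(1 ≤ 0 ∧ 0 < 2 * t + 1) by omega), add_zero]

end
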